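/- arXiv:1610.05416 — 4 statements merged into one kernel-verified Lean document; each statement's English description precedes it below -/
import Mathlib

section
/- Let S_1, ..., S_n be arbitrary subsets of ℝ^m and let z be a k-extreme point of the convex hull of the Minkowski sum S_1 + ... + S_n. Then there exist integers k_1,...,k_n with 1 ≤ k_i ≤ k+1 and k_1 + ... + k_n ≤ k + n, and points z^i belonging to the k_i-th convex hull conv_{k_i} S_i, such that z = z^1 + ... + z^n. -/
/-!
Among all ways of writing `z = ∑ i, ∑ j ∈ g⁻¹ i, α j • v j` as a sum of convex combinations of
points `v j ∈ S (g j)`, take one with the fewest points `N`. Minimality makes every `α j`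
positive, and makes `β ↦ ∑ j, β j • v j` injective on the space `V` of weight vectors summing to
zero on every fibre of `g`: a kernel vector could be used to remove a point, as in Carathéodory's
theorem. For `β ∈ V` the points `z ± ε • ∑ j, β j • v j` stay in the hull for small `ε > 0`, so
`k`-extremality gives `dim V ≤ k`, while `dim V ≥ N - n`. Hence `N ≤ k + n`, and the fibre sizes
are the required `k_i`.
-/

/-- The Minkowski sum `S 0 + S 1 + ... + S (n-1)` of a family of sets. -/
def minkSum {E : Type*} [AddCommMonoid E] {n : ℕ} (S : Fin n → Set E) : Set E :=
  {x | ∃ w : Fin n → E, (∀ i, w i ∈ S i) ∧ x = ∑ i, w i}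

/-- The `k`-th convex hull of `S`: all convex combinations of `k` points of `S`. -/
def convHullK {E : Type*} [AddCommMonoid E] [Module ℝ E] (k : ℕ) (S : Set E) : Set E :=
  {x | ∃ (v : Fin k → E) (α : Fin k → ℝ),
    (∀ j, v j ∈ S) ∧ (∀ j, 0 ≤ α j) ∧ (∑ j, α j) = 1 ∧ x = ∑ j, α j • v j}

/-- `z` is a `k`-extreme point of `C`: `z ∈ C` and there are no `k+1` linearly
independent vectors `d i` with `z ± d i ∈ C`. -/
def IsKExtreme {E : Type*} [AddCommGroup E] [Module ℝ E] (k : ℕ) (C : Set E) (z : E) : Prop :=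
  z ∈ C ∧ ¬ ∃ d : Fin (k + 1) → E, LinearIndependent ℝ d ∧ ∀ i, z + d i ∈ C ∧ z - d i ∈ C

open Finset Filter Topology Module Pointwise

section Perturbation

variable {ι : Type*} [Fintype ι]

lemma exists_pos_nonneg_add_smul_and_sub_smul {α : ι → ℝ} (hα : ∀ j, 0 < α j)
    (β : ι → ℝ) : ∃ ε : ℝ, 0 < ε ∧ 0 ≤ α + ε • β ∧ 0 ≤ α - ε • β := by
  have hnear : ∀ᶠ s in 𝓝 (0 : ℝ), ∀ j, 0 < α j + s * β j ∧ 0 < α j - s * β j := by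
    refine eventually_all.2 fun j => ?_
    have hplus : Tendsto (fun s : ℝ => α j + s * β j) (𝓝 0) (𝓝 (α j)) :=
      (by fun_prop : Continuous fun s : ℝ => α j + s * β j).tendsto' 0 _ (by simp)
    have hminus : Tendsto (fun s : ℝ => α j - s * β j) (𝓝 0) (𝓝 (α j)) :=
      (by fun_prop : Continuous fun s : ℝ => α j - s * β j).tendsto' 0 _ (by simp)
    exact (hplus.eventually (lt_mem_nhds (hα j))).and (hminus.eventually (lt_mem_nhds (hα j)))
  obtain ⟨ε, hε, hnonneg⟩ :=
    (eventually_mem_nhdsWithin.and (nhdsWithin_le_nhds hnear) : ∀ᶠ s in 𝓝[>] (0 : ℝ), _).exists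
  exact ⟨ε, hε, fun j => by simpa using (hnonneg j).1.le, fun j => by simpa using (hnonneg j).2.le⟩

lemma exists_nonneg_add_smul_eq_zero {α β : ι → ℝ} (hα : 0 ≤ α) (hβ : ∃ j, β j < 0) :
    ∃ t : ℝ, 0 ≤ α + t • β ∧ ∃ j, (α + t • β) j = 0 := by
  set D := univ.filter fun j => β j < 0
  have hD : D.Nonempty := by simpa [D, Finset.Nonempty] using hβ
  -- The step is the largest one along `β` that keeps all coordinates nonnegative.
  obtain ⟨j₀, hj₀, hmin⟩ := exists_min_image D (fun j => α j / -β j) hD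
  have hj₀neg : β j₀ < 0 := (mem_filter.1 hj₀).2
  refine ⟨α j₀ / -β j₀, fun j => ?_, j₀, ?_⟩
  · simp only [Pi.add_apply, Pi.smul_apply, smul_eq_mul, Pi.zero_apply]
    rcases lt_or_ge (β j) 0 with hj | hj
    · have := (le_div_iff₀ (neg_pos.2 hj)).1 (hmin j (mem_filter.2 ⟨mem_univ j, hj⟩))
      linarith
    · exact add_nonneg (hα j) (mul_nonneg (div_nonneg (hα j₀) (by linarith)) hj)
  · simp only [Pi.add_apply, Pi.smul_apply, smul_eq_mul]
    field_simp [hj₀neg.ne]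
    ring

end Perturbation

lemma add_card_sub_one_le_sum {ι : Type*} [Fintype ι] [DecidableEq ι] {f : ι → ℕ}
    (hf : ∀ i, 1 ≤ f i) (i : ι) : f i + (Fintype.card ι - 1) ≤ ∑ j, f j := by
  have hrest := card_nsmul_le_sum (univ.erase i) (fun j => f j) 1 fun j _ => hf j
  rw [card_erase_of_mem (mem_univ i), card_univ, smul_eq_mul, mul_one] at hrest
  rw [← add_sum_erase univ f (mem_univ i)]
  omega

lemma IsKExtreme.finrank_le {E : Type*} [AddCommGroup E] [Module ℝ E] {k : ℕ} {C : Set E}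
    {z : E} (hz : IsKExtreme k C z) {W : Submodule ℝ E}
    (hW : ∀ w ∈ W, ∃ ε : ℝ, ε ≠ 0 ∧ z + ε • w ∈ C ∧ z - ε • w ∈ C) :
    finrank ℝ W ≤ k := by
  by_contra! hk
  obtain ⟨b, hb⟩ := exists_linearIndependent_of_le_finrank (Nat.succ_le_of_lt hk)
  choose ε hε hC using fun t => hW _ (b t).2
  refine hz.2 ⟨fun t => ε t • (b t : E), ?_, hC⟩
  exact (hb.map' W.subtype W.ker_subtype).units_smul fun t => Units.mk0 (ε t) (hε t)

lemma minkSum_eq_sum {E : Type*} [AddCommMonoid E] {n : ℕ} (S : Fin n → Set E) :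
    minkSum S = ∑ i, S i := by
  ext x
  simp [minkSum, Set.mem_fintype_sum, eq_comm]

section FiberedRepresentation

variable {E : Type*} [AddCommGroup E] [Module ℝ E]

lemma convexHull_minkSum {n : ℕ} (S : Fin n → Set E) :
    convexHull ℝ (minkSum S) = minkSum fun i => convexHull ℝ (S i) := by
  rw [minkSum_eq_sum, minkSum_eq_sum, convexHull_sum]

lemma sum_smul_mem_convHullK {κ : Type*} (s : Finset κ) {S : Set E} {v : κ → E} {α : κ → ℝ}
    (hv : ∀ j ∈ s, v j ∈ S) (hα : ∀ j ∈ s, 0 ≤ α j) (h1 : ∑ j ∈ s, α j = 1) :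
    ∑ j ∈ s, α j • v j ∈ convHullK #s S := by
  set e := s.equivFin
  refine ⟨fun t => v (e.symm t), fun t => α (e.symm t), fun t => hv _ (e.symm t).2,
    fun t => hα _ (e.symm t).2, ?_, ?_⟩
  · rw [e.symm.sum_comp fun j : s => α j, sum_coe_sort s α, h1]
  · rw [e.symm.sum_comp fun j : s => α j • v j, sum_coe_sort s fun j => α j • v j]

def fiberSum {κ ι : Type*} [Fintype κ] [DecidableEq ι] (g : κ → ι) :
    (κ → ℝ) →ₗ[ℝ] (ι → ℝ) :=
  LinearMap.pi fun i => ∑ j ∈ univ.filter (g · = i), LinearMap.proj j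

lemma fiberSum_apply {κ ι : Type*} [Fintype κ] [DecidableEq ι] (g : κ → ι) (α : κ → ℝ) (i : ι) :
    fiberSum g α i = ∑ j ∈ univ.filter (g · = i), α j := by
  simp [fiberSum]

lemma exists_neg_of_fiberSum_eq_zero {κ ι : Type*} [Fintype κ] [DecidableEq ι] {g : κ → ι}
    {β : κ → ℝ} (hβ : β ≠ 0) (hsum : fiberSum g β = 0) : ∃ j, β j < 0 := by
  by_contra! hnonneg
  refine hβ (funext fun j => ?_)
  have hfiber : ∑ j' ∈ univ.filter (g · = g j), β j' = 0 := by
    rw [← fiberSum_apply, hsum, Pi.zero_apply]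
  exact (sum_eq_zero_iff_of_nonneg fun j' _ => hnonneg j').1 hfiber j (by simp)

variable {n : ℕ}

/-- `z = ∑ i, ∑ j ∈ g⁻¹ i, α j • v j` with `v j ∈ S (g j)`, each inner sum a convex combination:
a point of `convexHull ℝ (minkSum S)` written with `N` points in total. -/
def HasFiberedRep (S : Fin n → Set E) (z : E) (N : ℕ) : Prop :=
  ∃ (g : Fin N → Fin n) (v : Fin N → E) (α : Fin N → ℝ), (∀ j, v j ∈ S (g j)) ∧ 0 ≤ α ∧
    fiberSum g α = 1 ∧ Fintype.linearCombination ℝ v α = z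

variable {S : Fin n → Set E}

lemma linearCombination_mem_convexHull_minkSum {N : ℕ} {g : Fin N → Fin n} {v : Fin N → E}
    {α : Fin N → ℝ} (hv : ∀ j, v j ∈ S (g j)) (hα : 0 ≤ α) (h1 : fiberSum g α = 1) :
    Fintype.linearCombination ℝ v α ∈ convexHull ℝ (minkSum S) := by
  rw [convexHull_minkSum]
  refine ⟨fun i => ∑ j ∈ univ.filter (g · = i), α j • v j, fun i => ?_, ?_⟩
  · refine (convex_convexHull ℝ (S i)).sum_mem (fun j _ => hα j) ?_ fun j hj => ?_
    · simpa [fiberSum_apply] using congr_fun h1 i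
    · exact subset_convexHull ℝ (S i) ((mem_filter.1 hj).2 ▸ hv j)
  · rw [Fintype.linearCombination_apply, sum_fiberwise]

lemma HasFiberedRep.of_fintype {κ : Type*} [Fintype κ] {g : κ → Fin n} {v : κ → E} {α : κ → ℝ}
    (hv : ∀ j, v j ∈ S (g j)) (hα : 0 ≤ α) (h1 : fiberSum g α = 1) :
    HasFiberedRep S (Fintype.linearCombination ℝ v α) (Fintype.card κ) := by
  set e := (Fintype.equivFin κ).symm
  refine ⟨g ∘ e, v ∘ e, α ∘ e, fun j => hv _, fun j => hα _, ?_, ?_⟩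
  · ext i
    rw [← h1, fiberSum_apply, fiberSum_apply, sum_filter, sum_filter]
    exact e.sum_comp fun j => if g j = i then α j else 0
  · simp only [Fintype.linearCombination_apply]
    exact e.sum_comp fun j => α j • v j

lemma exists_hasFiberedRep {z : E} (hz : z ∈ convexHull ℝ (minkSum S)) :
    ∃ N, HasFiberedRep S z N := by
  rw [convexHull_minkSum] at hz
  obtain ⟨w, hw, rfl⟩ := hz
  choose ι _ wt pt hwt₀ hwt₁ hpt hw using fun i => mem_convexHull_iff_exists_fintype.1 (hw i)
  have h1 : fiberSum (Sigma.fst : (Σ i, ι i) → Fin n) (fun x => wt x.1 x.2) = 1 := by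
    ext i
    simp [fiberSum_apply, sum_filter, Fintype.sum_sigma, sum_ite_irrel, hwt₁]
  have hz : Fintype.linearCombination ℝ (fun x : Σ i, ι i => pt x.1 x.2) (fun x => wt x.1 x.2) =
      ∑ i, w i := by
    simp [Fintype.linearCombination_apply, Fintype.sum_sigma, hw]
  exact ⟨_, hz ▸ HasFiberedRep.of_fintype (fun x : Σ i, ι i => hpt x.1 x.2)
    (fun x : Σ i, ι i => hwt₀ x.1 x.2) h1⟩

lemma hasFiberedRep_pred_of_eq_zero {N : ℕ} {g : Fin N → Fin n} {v : Fin N → E}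
    {α : Fin N → ℝ} (hv : ∀ j, v j ∈ S (g j)) (hα : 0 ≤ α) (h1 : fiberSum g α = 1)
    {j₀ : Fin N} (h0 : α j₀ = 0) :
    HasFiberedRep S (Fintype.linearCombination ℝ v α) (N - 1) := by
  cases N with
  | zero => exact j₀.elim0
  | succ N =>
    refine ⟨g ∘ j₀.succAbove, v ∘ j₀.succAbove, α ∘ j₀.succAbove, fun j => hv _, fun j => hα _,
      ?_, ?_⟩
    · ext i
      rw [← h1, fiberSum_apply, fiberSum_apply, sum_filter, sum_filter,
        Fin.sum_univ_succAbove _ j₀, h0, ite_self, zero_add]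
      rfl
    · simp only [Fintype.linearCombination_apply]
      rw [Fin.sum_univ_succAbove _ j₀, h0, zero_smul, zero_add]
      rfl

lemma hasFiberedRep_pred_of_mem_ker {N : ℕ} {g : Fin N → Fin n} {v : Fin N → E}
    {α : Fin N → ℝ} (hv : ∀ j, v j ∈ S (g j)) (hα : 0 ≤ α) (h1 : fiberSum g α = 1)
    {β : Fin N → ℝ} (hβ : β ≠ 0) (hβg : fiberSum g β = 0)
    (hβv : Fintype.linearCombination ℝ v β = 0) :
    HasFiberedRep S (Fintype.linearCombination ℝ v α) (N - 1) := by
  obtain ⟨t, ht, j₀, hj₀⟩ :=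
    exists_nonneg_add_smul_eq_zero hα (exists_neg_of_fiberSum_eq_zero hβ hβg)
  have h1' : fiberSum g (α + t • β) = 1 := by rw [map_add, map_smul, hβg, smul_zero, add_zero, h1]
  simpa [hβv] using hasFiberedRep_pred_of_eq_zero hv ht h1' hj₀

lemma HasFiberedRep.exists_convHullK {k N : ℕ} {z : E} (h : HasFiberedRep S z N)
    (hN : N ≤ k + n) :
    ∃ (ks : Fin n → ℕ) (z' : Fin n → E), (∀ i, 1 ≤ ks i ∧ ks i ≤ k + 1) ∧ (∑ i, ks i) ≤ k + n ∧
      (∀ i, z' i ∈ convHullK (ks i) (S i)) ∧ z = ∑ i, z' i := by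
  obtain ⟨g, v, α, hv, hα, h1, rfl⟩ := h
  set F : Fin n → Finset (Fin N) := fun i => univ.filter (g · = i)
  have hF1 (i : Fin n) : ∑ j ∈ F i, α j = 1 := by rw [← fiberSum_apply, h1, Pi.one_apply]
  have hcard_pos (i : Fin n) : 1 ≤ #(F i) :=
    card_pos.2 (nonempty_of_sum_ne_zero (hF1 i ▸ one_ne_zero))
  have hcard_sum : ∑ i, #(F i) = N := by
    rw [← card_eq_sum_card_fiberwise fun j _ => mem_univ (g j), card_univ, Fintype.card_fin]
  refine ⟨fun i => #(F i), fun i => ∑ j ∈ F i, α j • v j, fun i => ⟨hcard_pos i, ?_⟩,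
    hcard_sum.le.trans hN, fun i => ?_, ?_⟩
  · have hle := add_card_sub_one_le_sum hcard_pos i
    rw [Fintype.card_fin, hcard_sum] at hle
    change #(F i) ≤ k + 1
    omega
  · exact sum_smul_mem_convHullK _ (fun j hj => (mem_filter.1 hj).2 ▸ hv j) (fun j _ => hα j)
      (hF1 i)
  · rw [Fintype.linearCombination_apply, sum_fiberwise]

lemma IsKExtreme.le_of_hasFiberedRep {k N : ℕ} {z : E}
    (hz : IsKExtreme k (convexHull ℝ (minkSum S)) z) (h : HasFiberedRep S z N)
    (hmin : ∀ N' < N, ¬ HasFiberedRep S z N') : N ≤ k + n := by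
  obtain ⟨g, v, α, hv, hα, h1, rfl⟩ := h
  rcases N.eq_zero_or_pos with rfl | hN
  · exact Nat.zero_le _
  have hshorter := hmin (N - 1) (Nat.sub_lt hN one_pos)
  set T := Fintype.linearCombination ℝ v
  set V := LinearMap.ker (fiberSum g)
  have hpos (j : Fin N) : 0 < α j :=
    (hα j).lt_of_ne' fun h0 => hshorter (hasFiberedRep_pred_of_eq_zero hv hα h1 h0)
  have hinj : Function.Injective (T.comp V.subtype) := by
    rw [← LinearMap.ker_eq_bot, Submodule.eq_bot_iff]
    intro β hβ
    by_contra hne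
    exact hshorter (hasFiberedRep_pred_of_mem_ker hv hα h1 (fun h0 => hne (Subtype.ext h0)) β.2 hβ)
  have hmem (γ : Fin N → ℝ) (hγ : γ ∈ V) (hnonneg : 0 ≤ α + γ) :
      T α + T γ ∈ convexHull ℝ (minkSum S) := by
    rw [← map_add]
    refine linearCombination_mem_convexHull_minkSum hv hnonneg ?_
    rw [map_add, LinearMap.mem_ker.1 hγ, add_zero, h1]
  have hrange : finrank ℝ (LinearMap.range (T.comp V.subtype)) ≤ k := by
    refine hz.finrank_le ?_
    rintro _ ⟨β, rfl⟩
    obtain ⟨ε, hε, hplus, hminus⟩ := exists_pos_nonneg_add_smul_and_sub_smul hpos β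
    refine ⟨ε, hε.ne', ?_, ?_⟩
    · simpa using hmem (ε • β) (V.smul_mem ε β.2) hplus
    · simpa [sub_eq_add_neg] using hmem (-(ε • β)) (V.neg_mem (V.smul_mem ε β.2))
        (by rwa [← sub_eq_add_neg])
  have hrank : finrank ℝ (LinearMap.range (fiberSum g)) + finrank ℝ V = N := by
    rw [(fiberSum g).finrank_range_add_finrank_ker, Module.finrank_fin_fun]
  have hrange_le : finrank ℝ (LinearMap.range (fiberSum g)) ≤ n :=
    (Submodule.finrank_le _).trans (Module.finrank_fin_fun ℝ).le
  rw [LinearMap.finrank_range_of_inj hinj] at hrange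
  omega

end FiberedRepresentation

/-- **Refined Shapley–Folkman lemma.** -/
theorem refined_shapley_folkman (m n k : ℕ) (S : Fin n → Set (Fin m → ℝ))
    (z : Fin m → ℝ) (hz : IsKExtreme k (convexHull ℝ (minkSum S)) z) :
    ∃ (ks : Fin n → ℕ) (z' : Fin n → (Fin m → ℝ)),
      (∀ i, 1 ≤ ks i ∧ ks i ≤ k + 1) ∧ (∑ i, ks i) ≤ k + n ∧
      (∀ i, z' i ∈ convHullK (ks i) (S i)) ∧ z = ∑ i, z' i := by
  classical
  have hrep : ∃ N, HasFiberedRep S z N := exists_hasFiberedRep hz.1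
  exact (Nat.find_spec hrep).exists_convHullK
    (hz.le_of_hasFiberedRep (Nat.find_spec hrep) fun _ => Nat.find_min hrep)
end

section
/- Let f(x) = min_{s=1,...,n} x_s be defined on the box {x ∈ ℝ^n : 0 ≤ x ≤ 1} (and +∞ outside). Then for every integer k with 1 ≤ k ≤ n, the k-th nonconvexity satisfies ρ^k(f) = (k−1)/k, and for every k ≥ n+1, ρ^k(f) = (n−1)/n. -/
/-!
Write `m = min k n`. For the upper bound, let `σ j` be a coordinate where the point `x j` attains
its minimum and `S` the set of these coordinates, so `#S ≤ m`. In
`∑ s ∈ S, (y s - ∑ j, α j * min (x j))`, with `y = ∑ j, α j • x j`, each point contributes `0` at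
`σ j` and at most `α j` at the other `#S - 1` coordinates, so some `s ∈ S` has
`min y - ∑ j, α j * min (x j) ≤ y s - ∑ j, α j * min (x j) ≤ 1 - 1 / #S ≤ 1 - 1 / m`.
Equality is attained by the `m` vertices `1 - e_j` with weights `1 / m`: each has minimum `0`,
while their average has all coordinates at least `1 - 1 / m`.
-/

/-- The `k`-th nonconvexity `ρᵏ(f)` of a function `f : E → ℝ ∪ {+∞}` (encoded with
values in `EReal`). -/
noncomputable def rhoK {E : Type*} [AddCommMonoid E] [Module ℝ E] (k : ℕ)
    (f : E → EReal) : EReal :=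
  sSup {d : EReal | ∃ (x : Fin k → E) (α : Fin k → ℝ),
    (∀ j, f (x j) ≠ ⊤) ∧ (∀ j, 0 ≤ α j) ∧ (∑ j, α j) = 1 ∧
    d = f (∑ j, α j • x j) - ∑ j, (α j : EReal) * f (x j)}

open Finset

@[norm_cast]
lemma EReal.coe_finsetSum {ι : Type*} (s : Finset ι) (a : ι → ℝ) :
    ((∑ i ∈ s, a i : ℝ) : EReal) = ∑ i ∈ s, (a i : EReal) :=
  map_sum (⟨⟨Real.toEReal, EReal.coe_zero⟩, EReal.coe_add⟩ : ℝ →+ EReal) a s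

lemma exists_sum_mul_sub_sum_mul_le {ι κ : Type*} [Fintype ι] [DecidableEq κ] {S : Finset κ}
    {x : ι → κ → ℝ} {α : ι → ℝ} {σ : ι → κ} (hσ : ∀ j, σ j ∈ S)
    (hx : ∀ j s, x j s ≤ x j (σ j) + 1) (hα : ∀ j, 0 ≤ α j) (hα1 : ∑ j, α j = 1) :
    ∃ s ∈ S, ∑ j, α j * x j s - ∑ j, α j * x j (σ j) ≤ 1 - (#S : ℝ)⁻¹ := by
  obtain ⟨j₀, -, -⟩ := exists_ne_zero_of_sum_ne_zero (hα1 ▸ one_ne_zero : ∑ j, α j ≠ 0)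
  have hS : S.Nonempty := ⟨σ j₀, hσ j₀⟩
  have hcard : (0 : ℝ) < #S := by exact_mod_cast hS.card_pos
  have hrow : ∀ j, ∑ s ∈ S, (x j s - x j (σ j)) ≤ #S - 1 := fun j =>
    calc ∑ s ∈ S, (x j s - x j (σ j)) ≤ ∑ s ∈ S, (1 - if s = σ j then 1 else 0) :=
          sum_le_sum fun s _ => by split_ifs with h <;> [simp [h]; linarith [hx j s]]
      _ = #S - 1 := by rw [sum_sub_distrib, sum_ite_eq', if_pos (hσ j)]; simp
  apply exists_le_of_sum_le hS
  calc ∑ s ∈ S, (∑ j, α j * x j s - ∑ j, α j * x j (σ j))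
      = ∑ j, α j * ∑ s ∈ S, (x j s - x j (σ j)) := by
        simp_rw [← sum_sub_distrib, ← mul_sub, mul_sum]; exact sum_comm
    _ ≤ ∑ j, α j * (#S - 1) := sum_le_sum fun j _ => mul_le_mul_of_nonneg_left (hrow j) (hα j)
    _ = ∑ s ∈ S, (1 - (#S : ℝ)⁻¹) := by
        rw [← sum_mul, hα1, sum_const, nsmul_eq_mul]; field_simp

lemma sum_smul_mem_unitBox {ι κ : Type*} [Fintype ι] {x : ι → κ → ℝ} {α : ι → ℝ}
    (hx : ∀ j s, 0 ≤ x j s ∧ x j s ≤ 1) (hα : ∀ j, 0 ≤ α j) (hα1 : ∑ j, α j = 1) (s : κ) :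
    0 ≤ (∑ j, α j • x j) s ∧ (∑ j, α j • x j) s ≤ 1 := by
  have hbox := (convex_Icc (0 : κ → ℝ) 1).sum_mem (fun j _ => hα j) hα1
    (fun j _ => by simpa [Pi.le_def, forall_and] using hx j)
  simp only [Set.mem_Icc, Pi.le_def] at hbox
  exact ⟨hbox.1 s, hbox.2 s⟩

section MinOnBox

variable {n k : ℕ} {f : (Fin n → ℝ) → EReal}

lemma sub_sum_eq_of_mem_unitBox
    (hf_in : ∀ x : Fin n → ℝ, (∀ s, 0 ≤ x s ∧ x s ≤ 1) → f x = ((⨅ s, x s : ℝ) : EReal))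
    {x : Fin k → Fin n → ℝ} {α : Fin k → ℝ}
    (hx : ∀ j s, 0 ≤ x j s ∧ x j s ≤ 1) (hα : ∀ j, 0 ≤ α j) (hα1 : ∑ j, α j = 1) :
    f (∑ j, α j • x j) - ∑ j, (α j : EReal) * f (x j)
      = (((⨅ s, ∑ j, α j * x j s) - ∑ j, α j * ⨅ s, x j s : ℝ) : EReal) := by
  rw [hf_in _ (sum_smul_mem_unitBox hx hα hα1)]
  simp_rw [hf_in _ (hx _)]
  push_cast
  simp only [Finset.sum_apply, Pi.smul_apply, smul_eq_mul]

lemma iInf_sum_mul_sub_sum_mul_iInf_le (hn : 0 < n)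
    {x : Fin k → Fin n → ℝ} {α : Fin k → ℝ}
    (hx : ∀ j s, 0 ≤ x j s ∧ x j s ≤ 1) (hα : ∀ j, 0 ≤ α j) (hα1 : ∑ j, α j = 1) :
    (⨅ s, ∑ j, α j * x j s) - ∑ j, α j * ⨅ s, x j s ≤ 1 - ((min k n : ℕ) : ℝ)⁻¹ := by
  have : Nonempty (Fin n) := ⟨⟨0, hn⟩⟩
  choose σ hσ using fun j => exists_eq_ciInf_of_finite (f := x j)
  obtain ⟨s, hsS, hs⟩ := exists_sum_mul_sub_sum_mul_le (S := univ.image σ) (x := x)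
    (fun j => mem_image_of_mem σ (mem_univ j)) (fun j s => by linarith [hx j s, hx j (σ j)]) hα hα1
  have hcard : #(univ.image σ) ≤ min k n :=
    le_min (card_image_le.trans_eq (card_fin k)) ((card_le_univ _).trans_eq (Fintype.card_fin n))
  have hpos : 0 < #(univ.image σ) := card_pos.2 ⟨s, hsS⟩
  simp_rw [← hσ]
  calc (⨅ s, ∑ j, α j * x j s) - ∑ j, α j * x j (σ j)
      ≤ ∑ j, α j * x j s - ∑ j, α j * x j (σ j) := by
        gcongr; exact ciInf_le (Finite.bddBelow_range _) s
    _ ≤ 1 - (#(univ.image σ) : ℝ)⁻¹ := hs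
    _ ≤ 1 - ((min k n : ℕ) : ℝ)⁻¹ := by gcongr

lemma le_rhoK_of_min_on_box (hn : 0 < n) (hk : 1 ≤ k)
    (hf_in : ∀ x : Fin n → ℝ, (∀ s, 0 ≤ x s ∧ x s ≤ 1) → f x = ((⨅ s, x s : ℝ) : EReal)) :
    (((1 : ℝ) - ((min k n : ℕ) : ℝ)⁻¹ : ℝ) : EReal) ≤ rhoK k f := by
  set m := min k n
  have hm0 : (0 : ℝ) < m := by exact_mod_cast le_min hk hn
  let x : Fin k → Fin n → ℝ := fun j s => if (s : ℕ) = j then 0 else 1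
  let α : Fin k → ℝ := fun j => if (j : ℕ) < m then (m : ℝ)⁻¹ else 0
  have hx : ∀ j s, 0 ≤ x j s ∧ x j s ≤ 1 := fun j s => by
    simp only [x]; split_ifs <;> norm_num
  have hα : ∀ j, 0 ≤ α j := fun j => by simp only [α]; split_ifs <;> positivity
  have hα1 : ∑ j, α j = 1 := by
    simp only [α]
    rw [sum_ite, sum_const_zero, add_zero, sum_const, Fin.card_filter_val_lt,
      min_eq_right (min_le_left k n), nsmul_eq_mul, mul_inv_cancel₀ hm0.ne']
  have hy : ∀ s, 1 - (m : ℝ)⁻¹ ≤ ∑ j, α j * x j s := fun s =>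
    calc 1 - (m : ℝ)⁻¹ ≤ ∑ j, α j - ∑ j : Fin k, if (s : ℕ) = j then (m : ℝ)⁻¹ else 0 := by
          rw [hα1, Fin.sum_univ_eq_sum_range (fun i => if (s : ℕ) = i then (m : ℝ)⁻¹ else 0),
            sum_ite_eq]
          split_ifs <;> linarith [inv_nonneg.2 hm0.le]
      _ ≤ ∑ j, α j * x j s := by
          rw [← sum_sub_distrib]
          refine sum_le_sum fun j _ => ?_
          simp only [x, α]
          split_ifs <;> simp
  have hxmin : ∀ j, α j * ⨅ s, x j s ≤ 0 := fun j => by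
    by_cases hj : (j : ℕ) < m
    · refine mul_nonpos_of_nonneg_of_nonpos (hα j) ?_
      calc ⨅ s, x j s ≤ x j ⟨j, hj.trans_le (min_le_right k n)⟩ :=
            ciInf_le (Finite.bddBelow_range _) _
        _ = 0 := if_pos rfl
    · simp [α, hj]
  have : Nonempty (Fin n) := ⟨⟨0, hn⟩⟩
  refine le_sSup_of_le ⟨x, α, fun j => hf_in _ (hx j) ▸ EReal.coe_ne_top _, hα, hα1, rfl⟩ ?_
  rw [sub_sum_eq_of_mem_unitBox hf_in hx hα hα1, EReal.coe_le_coe_iff]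
  linarith [le_ciInf hy, sum_nonpos fun j (_ : j ∈ univ) => hxmin j]

lemma rhoK_eq_of_min_on_box (hn : 0 < n) (hk : 1 ≤ k)
    (hf_in : ∀ x : Fin n → ℝ, (∀ s, 0 ≤ x s ∧ x s ≤ 1) → f x = ((⨅ s, x s : ℝ) : EReal))
    (hf_out : ∀ x : Fin n → ℝ, ¬ (∀ s, 0 ≤ x s ∧ x s ≤ 1) → f x = ⊤) :
    rhoK k f = (((1 : ℝ) - ((min k n : ℕ) : ℝ)⁻¹ : ℝ) : EReal) := by
  refine le_antisymm (sSup_le ?_) (le_rhoK_of_min_on_box hn hk hf_in)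
  rintro _ ⟨x, α, hfin, hα, hα1, rfl⟩
  have hx : ∀ j s, 0 ≤ x j s ∧ x j s ≤ 1 := fun j => not_not.1 fun h => hfin j (hf_out _ h)
  rw [sub_sum_eq_of_mem_unitBox hf_in hx hα hα1, EReal.coe_le_coe_iff]
  exact iInf_sum_mul_sub_sum_mul_iInf_le hn hx hα hα1

end MinOnBox

/-- The `k`-th nonconvexity of `f(x) = min_s x_s` on the box `0 ≤ x ≤ 1` equals
`(k−1)/k` for `1 ≤ k ≤ n` and `(n−1)/n` for `k ≥ n+1`. -/
theorem rhoK_min_on_box (n : ℕ) (hn : 0 < n) (f : (Fin n → ℝ) → EReal)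
    (hf_in : ∀ x : Fin n → ℝ, (∀ s, 0 ≤ x s ∧ x s ≤ 1) → f x = ((⨅ s, x s : ℝ) : EReal))
    (hf_out : ∀ x : Fin n → ℝ, ¬ (∀ s, 0 ≤ x s ∧ x s ≤ 1) → f x = ⊤) :
    (∀ k : ℕ, 1 ≤ k → k ≤ n → rhoK k f = (((k : ℝ) - 1) / (k : ℝ) : EReal)) ∧
    (∀ k : ℕ, n + 1 ≤ k → rhoK k f = (((n : ℝ) - 1) / (n : ℝ) : EReal)) := by
  have h_one_sub_inv : ∀ m : ℕ, 0 < m → (1 : ℝ) - (m : ℝ)⁻¹ = ((m : ℝ) - 1) / m := fun m hm => by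
    field_simp
  refine ⟨fun k hk hkn => ?_, fun k hk => ?_⟩
  · rw [rhoK_eq_of_min_on_box hn hk hf_in hf_out, min_eq_left hkn, h_one_sub_inv k hk,
      EReal.coe_div, EReal.coe_sub, EReal.coe_one]
  · rw [rhoK_eq_of_min_on_box hn (by omega) hf_in hf_out, min_eq_right (by omega),
      h_one_sub_inv n hn, EReal.coe_div, EReal.coe_sub, EReal.coe_one]
end

section
/- Let g(x) = −log(max_{s=1,...,n} x_s) be defined on the region {x ∈ ℝ^n : x ≥ 0, x ≠ 0} (and +∞ outside). Then for every integer k with 1 ≤ k ≤ n, the k-th nonconvexity satisfies ρ^k(g) = log k, and for every k ≥ n+1, ρ^k(g) = log n. -/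
/-!
For a convex combination `y = ∑ α_j x^j` of points of the punctured orthant, put `m_j = max x^j`
and `M = max y`. The gap `g(y) - ∑ α_j g(x^j)` equals `∑ α_j log m_j - log M`, which concavity of
`log` bounds by `log (∑ α_j m_j / M)`. Moreover `∑ α_j m_j ≤ min(k, n) M`: each `α_j m_j` is at
most one coordinate of `y`, and `m_j ≤ ∑_s x^j_s`. The bound `log k` is attained for `k ≤ n` by the
barycenter of `k` distinct unit vectors; for `k > n`, padding with zero weights shows that
`ρ^k` is nondecreasing in `k`.
-/

open Finset

@[norm_cast]
theorem EReal.coe_finset_sum {ι : Type*} (s : Finset ι) (f : ι → ℝ) :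
    ((∑ i ∈ s, f i : ℝ) : EReal) = ∑ i ∈ s, (f i : EReal) :=
  map_sum (⟨⟨Real.toEReal, EReal.coe_zero⟩, EReal.coe_add⟩ : ℝ →+ EReal) f s

theorem convex_setOf_nonneg_ne_zero {E : Type*} [AddCommGroup E] [PartialOrder E]
    [IsOrderedAddMonoid E] [Module ℝ E] [PosSMulMono ℝ E] :
    Convex ℝ {x : E | 0 ≤ x ∧ x ≠ 0} := by
  rw [convex_iff_forall_pos]
  rintro x ⟨hx, hx0⟩ y ⟨hy, -⟩ a b ha hb -
  have hax : 0 ≤ a • x := smul_nonneg ha.le hx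
  have hby : 0 ≤ b • y := smul_nonneg hb.le hy
  refine ⟨add_nonneg hax hby, fun h => hx0 ?_⟩
  have := ((add_eq_zero_iff_of_nonneg hax hby).mp h).1
  exact (smul_eq_zero.mp this).resolve_left ha.ne'

theorem iSup_pos_of_nonneg_of_ne_zero {ι : Type*} [Finite ι] {x : ι → ℝ} (hx : 0 ≤ x)
    (hx0 : x ≠ 0) : 0 < ⨆ s, x s := by
  obtain ⟨t, ht⟩ := Function.ne_iff.mp hx0
  exact ((hx t).lt_of_ne' ht).trans_le (le_ciSup (Finite.bddAbove_range x) t)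

theorem sum_mul_iSup_le_min_card_mul_iSup {κ ι : Type*} [Fintype κ] [Fintype ι] [Nonempty ι]
    (α : κ → ℝ) (x : κ → ι → ℝ) (hα : 0 ≤ α) (hx : ∀ j, 0 ≤ x j) :
    ∑ j, α j * ⨆ s, x j s ≤
      ((min (Fintype.card κ) (Fintype.card ι) : ℕ) : ℝ) * ⨆ s, (∑ j, α j • x j) s := by
  set y := ∑ j, α j • x j
  have hy : ∀ s, y s = ∑ j, α j * x j s := fun s => by simp [y, Finset.sum_apply]
  have hyM : ∀ s, y s ≤ ⨆ s, y s := le_ciSup (Finite.bddAbove_range y)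
  have hterm : ∀ j s, α j * x j s ≤ y s := fun j s => by
    rw [hy]
    exact single_le_sum (f := fun i => α i * x i s) (fun i _ => mul_nonneg (hα i) (hx i s))
      (mem_univ j)
  rcases le_total (Fintype.card κ) (Fintype.card ι) with h | h
  · rw [min_eq_left h, ← nsmul_eq_mul, ← card_univ, ← sum_const]
    refine sum_le_sum fun j _ => ?_
    obtain ⟨s, hs⟩ := exists_eq_ciSup_of_finite (f := x j)
    rw [← hs]
    exact (hterm j s).trans (hyM s)
  · have hsup_le_sum : ∀ j, ⨆ s, x j s ≤ ∑ s, x j s := fun j =>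
      ciSup_le fun s => single_le_sum (fun t _ => hx j t) (mem_univ s)
    calc ∑ j, α j * ⨆ s, x j s ≤ ∑ j, α j * ∑ s, x j s :=
          sum_le_sum fun j _ => mul_le_mul_of_nonneg_left (hsup_le_sum j) (hα j)
      _ = ∑ s, y s := by simp_rw [hy, mul_sum]; exact sum_comm
      _ ≤ ∑ _s : ι, ⨆ s, y s := sum_le_sum fun s _ => hyM s
      _ = _ := by simp [min_eq_right h]

theorem rhoK_le_rhoK_add {E : Type*} [AddCommMonoid E] [Module ℝ E] (f : E → EReal) {k : ℕ}
    (hk : 0 < k) (m : ℕ) : rhoK k f ≤ rhoK (k + m) f := by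
  refine sSup_le_sSup ?_
  rintro _ ⟨x, α, hx, hα, hsum, rfl⟩
  refine ⟨Fin.append x fun _ => x ⟨0, hk⟩, Fin.append α 0, ?_, ?_, ?_, ?_⟩
  · exact Fin.addCases (by simpa using hx) (by simpa using fun _ => hx _)
  · exact Fin.addCases (by simpa using hα) (by simp)
  · simpa [Fin.sum_univ_add] using hsum
  · simp [Fin.sum_univ_add]

open Classical in
noncomputable def negLogMax {ι : Type*} (x : ι → ℝ) : EReal :=
  if 0 ≤ x ∧ x ≠ 0 then ((-Real.log (⨆ s, x s) : ℝ) : EReal) else ⊤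

theorem negLogMax_of_nonneg_of_ne_zero {ι : Type*} {x : ι → ℝ} (hx : 0 ≤ x) (hx0 : x ≠ 0) :
    negLogMax x = ((-Real.log (⨆ s, x s) : ℝ) : EReal) := by
  rw [negLogMax, if_pos ⟨hx, hx0⟩]

theorem nonneg_and_ne_zero_of_negLogMax_ne_top {ι : Type*} {x : ι → ℝ}
    (h : negLogMax x ≠ ⊤) : 0 ≤ x ∧ x ≠ 0 := by
  by_contra hx
  exact h (by rw [negLogMax, if_neg hx])

theorem rhoK_negLogMax_le {ι : Type*} [Fintype ι] (k : ℕ) :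
    rhoK k (negLogMax (ι := ι)) ≤ ((Real.log (min k (Fintype.card ι) : ℕ) : ℝ) : EReal) := by
  refine sSup_le ?_
  rintro _ ⟨x, α, hfin, hα, hsum, rfl⟩
  have hx := fun j => nonneg_and_ne_zero_of_negLogMax_ne_top (hfin j)
  have hy : 0 ≤ ∑ j, α j • x j ∧ ∑ j, α j • x j ≠ 0 :=
    convex_setOf_nonneg_ne_zero.sum_mem (fun j _ => hα j) hsum fun j _ => hx j
  have : Nonempty ι := by
    obtain ⟨s, -⟩ := Function.ne_iff.mp hy.2
    exact ⟨s⟩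
  have hk : 0 < k := Nat.pos_of_ne_zero fun hk => by subst hk; simp at hsum
  rw [negLogMax_of_nonneg_of_ne_zero hy.1 hy.2]
  simp_rw [negLogMax_of_nonneg_of_ne_zero (hx _).1 (hx _).2]
  set p : ℝ := ((min k (Fintype.card ι) : ℕ) : ℝ)
  set m := fun j => ⨆ s, x j s
  set M := ⨆ s, (∑ j, α j • x j) s
  have hp : 0 < p := Nat.cast_pos.mpr (lt_min hk Fintype.card_pos)
  have hm : ∀ j, 0 < m j := fun j => iSup_pos_of_nonneg_of_ne_zero (hx j).1 (hx j).2
  have hM : 0 < M := iSup_pos_of_nonneg_of_ne_zero hy.1 hy.2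
  have hmean : 0 < ∑ j, α j * m j :=
    (convex_Ioi (0 : ℝ)).sum_mem (fun j _ => hα j) hsum fun j _ => hm j
  have hjensen : ∑ j, α j * Real.log (m j) ≤ Real.log (∑ j, α j * m j) :=
    strictConcaveOn_log_Ioi.concaveOn.le_map_sum (fun j _ => hα j) hsum fun j _ => hm j
  have hbound : ∑ j, α j * m j ≤ p * M := by
    have := sum_mul_iSup_le_min_card_mul_iSup α x hα fun j => (hx j).1
    rwa [Fintype.card_fin] at this
  have hlog := Real.log_le_log hmean hbound
  rw [Real.log_mul hp.ne' hM.ne'] at hlog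
  have key : -Real.log M - ∑ j, α j * -Real.log (m j) ≤ Real.log p := by
    simp only [mul_neg, sum_neg_distrib]
    linarith
  exact_mod_cast key

theorem negLogMax_single {ι : Type*} [Finite ι] [DecidableEq ι] (i : ι) :
    negLogMax (Pi.single i (1 : ℝ)) = 0 := by
  have hmax : ⨆ s, (Pi.single i (1 : ℝ) : ι → ℝ) s = 1 := by
    have : Nonempty ι := ⟨i⟩
    refine le_antisymm (ciSup_le fun s => ?_) ?_
    · by_cases h : s = i <;> simp [h]
    · exact le_ciSup_of_le (Finite.bddAbove_range _) i (by simp)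
  rw [negLogMax_of_nonneg_of_ne_zero (Pi.single_nonneg.mpr zero_le_one) (by simp), hmax]
  simp

theorem log_le_rhoK_negLogMax {ι : Type*} [Finite ι] {k : ℕ} (hk : 0 < k) (e : Fin k ↪ ι) :
    ((Real.log k : ℝ) : EReal) ≤ rhoK k (negLogMax (ι := ι)) := by
  classical
  have : Nonempty ι := ⟨e ⟨0, hk⟩⟩
  have hk' : (0 : ℝ) < k := Nat.cast_pos.mpr hk
  set y : ι → ℝ := ∑ j, (1 / k : ℝ) • Pi.single (e j) 1 with hy_def
  have hy : ∀ s, y s = if s ∈ univ.map e then (1 / k : ℝ) else 0 := fun s => by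
    simp only [y, ← Pi.single_smul, smul_eq_mul, mul_one]
    rw [← sum_map univ e (fun i => Pi.single i (1 / k : ℝ)), Finset.sum_apply, sum_pi_single]
  have hy_le : ∀ s, y s ≤ 1 / k := fun s => by
    rw [hy]; split_ifs
    exacts [le_rfl, by positivity]
  have hy_nonneg : 0 ≤ y := fun s => by
    rw [hy]; split_ifs <;> positivity
  have hy_ne : y ≠ 0 := fun h => by
    have := congrFun h (e ⟨0, hk⟩)
    rw [hy, if_pos (mem_map_of_mem e (mem_univ _))] at this
    exact (one_div_pos.mpr hk').ne' this
  have hmax_pos := iSup_pos_of_nonneg_of_ne_zero hy_nonneg hy_ne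
  have hmax_le : ⨆ s, y s ≤ 1 / k := ciSup_le hy_le
  have hlog : Real.log k ≤ -Real.log (⨆ s, y s) := by
    rw [le_neg, ← Real.log_inv, ← one_div]
    exact Real.log_le_log hmax_pos hmax_le
  refine le_sSup_of_le ⟨fun j => Pi.single (e j) 1, fun _ => 1 / k, ?_, ?_, ?_, rfl⟩ ?_
  · simp [negLogMax_single]
  · intro j; positivity
  · simp [hk'.ne']
  · rw [← hy_def, negLogMax_of_nonneg_of_ne_zero hy_nonneg hy_ne]
    simp only [negLogMax_single, mul_zero, sum_const_zero, sub_zero]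
    exact_mod_cast hlog

/-- The `k`-th nonconvexity of `g(x) = −log(max_s x_s)` on `{x ≥ 0, x ≠ 0}` equals
`log k` for `1 ≤ k ≤ n` and `log n` for `k ≥ n+1`. -/
theorem rhoK_neg_log_max (n : ℕ) (hn : 0 < n) (g : (Fin n → ℝ) → EReal)
    (hg_in : ∀ x : Fin n → ℝ, (∀ s, 0 ≤ x s) → x ≠ 0 →
      g x = ((-Real.log (⨆ s, x s) : ℝ) : EReal))
    (hg_out : ∀ x : Fin n → ℝ, ¬ ((∀ s, 0 ≤ x s) ∧ x ≠ 0) → g x = ⊤) :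
    (∀ k : ℕ, 1 ≤ k → k ≤ n → rhoK k g = ((Real.log k : ℝ) : EReal)) ∧
    (∀ k : ℕ, n + 1 ≤ k → rhoK k g = ((Real.log n : ℝ) : EReal)) := by
  obtain rfl : g = negLogMax := funext fun x => by
    by_cases hx : 0 ≤ x ∧ x ≠ 0
    · rw [hg_in x hx.1 hx.2, negLogMax_of_nonneg_of_ne_zero hx.1 hx.2]
    · rw [hg_out x (by rwa [Pi.le_def] at hx), negLogMax, if_neg hx]
  refine ⟨fun k hk hkn => le_antisymm ?_ ?_, fun k hk => le_antisymm ?_ ?_⟩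
  · simpa [min_eq_left hkn] using rhoK_negLogMax_le (ι := Fin n) k
  · exact log_le_rhoK_negLogMax hk (Fin.castLEEmb hkn)
  · simpa [min_eq_right (n.le_succ.trans hk)] using rhoK_negLogMax_le (ι := Fin n) k
  · obtain ⟨m, rfl⟩ := Nat.exists_eq_add_of_le (n.le_succ.trans hk)
    exact (log_le_rhoK_negLogMax hn (Function.Embedding.refl _)).trans (rhoK_le_rhoK_add _ hn m)
end

section
/- Let 0 < σ ≤ 1 and define h_σ(x) = Σ_{s=1}^n log((‖x‖₁ − x_s + σ)/(‖x‖₁ + σ)) on the box {x ∈ ℝ^n : 0 ≤ x ≤ 1} (and +∞ outside). Then for every integer k ≥ 1, the k-th nonconvexity satisfies ρ^k(h_σ) ≤ log(k/σ); equivalently, for any k points x^1,...,x^k in the box and weights α_j ≥ 0 with Σ_{j=1}^k α_j = 1, h_σ(Σ_{j=1}^k α_j x^j) ≤ Σ_{j=1}^k α_j h_σ(x^j) + log(k/σ). -/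
open Finset Real

theorem rhoK_le_of_sum_smul_le {E : Type*} [AddCommGroup E] [Module ℝ E] {C : Set E}
    (hC : Convex ℝ C) {f : E → EReal} {g : E → ℝ} (hfC : ∀ x ∈ C, f x = g x)
    (hf : ∀ x ∉ C, f x = ⊤) {k : ℕ} {c : ℝ}
    (hg : ∀ (x : Fin k → E) (α : Fin k → ℝ), (∀ j, x j ∈ C) → (∀ j, 0 ≤ α j) →
      ∑ j, α j = 1 → g (∑ j, α j • x j) ≤ ∑ j, α j * g (x j) + c) :
    rhoK k f ≤ c := by
  refine sSup_le ?_
  rintro _ ⟨x, α, hx, hα0, hα1, rfl⟩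
  have hxC : ∀ j, x j ∈ C := fun j ↦ by_contra fun h ↦ hx j (hf _ h)
  have hsum : ∑ j, (α j : EReal) * f (x j) = ((∑ j, α j * g (x j) : ℝ) : EReal) := by
    refine .trans ?_
      (map_sum (⟨⟨Real.toEReal, EReal.coe_zero⟩, EReal.coe_add⟩ : ℝ →+ EReal) _ _).symm
    exact sum_congr rfl fun j _ ↦ by rw [hfC _ (hxC j)]; exact (EReal.coe_mul _ _).symm
  rw [hfC _ (hC.sum_mem (fun j _ ↦ hα0 j) hα1 fun j _ ↦ hxC j), hsum, ← EReal.coe_sub,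
    EReal.coe_le_coe_iff]
  linarith [hg x α hxC hα0 hα1]

theorem one_sub_sum_le_prod_one_sub {R ι : Type*} [CommRing R] [LinearOrder R]
    [IsStrictOrderedRing R] (s : Finset ι) {t : ι → R} (h0 : ∀ i ∈ s, 0 ≤ t i)
    (h1 : ∀ i ∈ s, t i ≤ 1) : 1 - ∑ i ∈ s, t i ≤ ∏ i ∈ s, (1 - t i) := by
  induction s using Finset.cons_induction with
  | empty => simp
  | cons a s _ ih =>
    rw [prod_cons, sum_cons]
    have ih := ih (fun i hi ↦ h0 i (mem_cons_of_mem hi)) (fun i hi ↦ h1 i (mem_cons_of_mem hi))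
    have hs : 0 ≤ ∑ i ∈ s, t i := sum_nonneg fun i hi ↦ h0 i (mem_cons_of_mem hi)
    have ha0 := h0 a (mem_cons_self a s)
    nlinarith [mul_le_mul_of_nonneg_left ih (sub_nonneg.2 (h1 a (mem_cons_self a s)))]

theorem mul_log_one_sub_le_log_one_sub_mul {t u : ℝ} (ht0 : 0 ≤ t) (ht1 : t ≤ 1) (hu : u < 1) :
    t * log (1 - u) ≤ log (1 - t * u) := by
  have h := strictConcaveOn_log_Ioi.concaveOn.2 (Set.mem_Ioi.2 one_pos)
    (Set.mem_Ioi.2 (sub_pos.2 hu)) (sub_nonneg.2 ht1) ht0 (by ring)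
  simp only [smul_eq_mul, log_one, mul_zero, zero_add, mul_one] at h
  rwa [show 1 - t + t * (1 - u) = 1 - t * u by ring] at h

theorem log_sub_one_le_mul_log_one_sub_inv {σ S : ℝ} (hσ0 : 0 < σ) (hσ1 : σ ≤ 1) (hS : 1 ≤ S) :
    log σ - 1 ≤ S * log (1 - 1 / (S + σ)) := by
  set a := S - 1 + σ
  have ha : σ ≤ a := by linarith
  have ha0 : 0 < a := hσ0.trans_le ha
  set D := log (1 + 1 / a)
  -- `S * D = a * D + (1 - σ) * D`, where `a * D ≤ 1` and
  -- `(1 - σ) * D ≤ (1 - σ) * log (1 + 1 / σ) ≤ -log σ`.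
  have hD : S * log (1 - 1 / (S + σ)) = -(S * D) := by
    rw [← mul_neg, ← log_inv]
    congr 2
    field_simp
    ring
  have haD : a * D ≤ 1 := by
    have := log_le_sub_one_of_pos (by positivity : 0 < 1 + 1 / a)
    calc a * D ≤ a * (1 / a) := by gcongr; linarith
      _ = 1 := by field_simp
  have hDσ : D ≤ log (1 + σ) - log σ := by
    rw [← log_div (by linarith) hσ0.ne', add_div, div_self hσ0.ne', add_comm (1 / σ)]
    exact log_le_log (by positivity) (by gcongr)
  have hlog1 : log (1 + σ) ≤ σ := by linarith [log_le_sub_one_of_pos (by linarith : 0 < 1 + σ)]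
  have hlogσ : log σ ≤ σ - 1 := log_le_sub_one_of_pos hσ0
  have hS : S = a + (1 - σ) := by ring
  rw [hD, hS]
  nlinarith [mul_le_mul_of_nonneg_left hDσ (sub_nonneg.2 hσ1)]

theorem min_one_sub_div_add_le_half {T σ : ℝ} (hT : 0 ≤ T) (hσ0 : 0 < σ) (hσ1 : σ ≤ 1) :
    min T 1 - T / (T + σ) ≤ 1 / 2 := by
  have hmono : T / (T + 1) ≤ T / (T + σ) := by gcongr
  have h1 : min T 1 - 1 / 2 ≤ T / (T + 1) := by
    rw [le_div_iff₀ (by positivity)]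
    rcases le_total T 1 with hT1 | hT1
    · rw [min_eq_left hT1]; nlinarith
    · rw [min_eq_right hT1]; linarith
  linarith

noncomputable def hSigma {ι : Type*} [Fintype ι] (σ : ℝ) (x : ι → ℝ) : ℝ :=
  ∑ s, log (((∑ t, x t) - x s + σ) / ((∑ t, x t) + σ))

section hSigma

variable {ι : Type*} [Fintype ι] {σ : ℝ} {x : ι → ℝ}

theorem hSigma_eq_sum_log_one_sub (h : (∑ t, x t) + σ ≠ 0) :
    hSigma σ x = ∑ s, log (1 - x s / ((∑ t, x t) + σ)) := by
  refine sum_congr rfl fun s _ ↦ congrArg log ?_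
  field_simp
  ring

theorem lt_sum_add (hx : 0 ≤ x) (hσ : 0 < σ) (s : ι) : x s < (∑ t, x t) + σ :=
  lt_add_of_le_of_pos (single_le_sum (fun t _ ↦ hx t) (mem_univ s)) hσ

theorem sum_add_pos (hx : 0 ≤ x) (hσ : 0 < σ) : 0 < (∑ t, x t) + σ :=
  add_pos_of_nonneg_of_pos (sum_nonneg fun t _ ↦ hx t) hσ

theorem one_sub_div_sum_add_pos (hx : 0 ≤ x) (hσ : 0 < σ) (s : ι) :
    0 < 1 - x s / ((∑ t, x t) + σ) := by
  rw [sub_pos, div_lt_one (sum_add_pos hx hσ)]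
  exact lt_sum_add hx hσ s

theorem hSigma_le_neg_div (hx : 0 ≤ x) (hσ : 0 < σ) :
    hSigma σ x ≤ -((∑ t, x t) / ((∑ t, x t) + σ)) := by
  have hb := sum_add_pos hx hσ
  rw [hSigma_eq_sum_log_one_sub hb.ne', sum_div, ← sum_neg_distrib]
  refine sum_le_sum fun s _ ↦ ?_
  linarith [log_le_sub_one_of_pos (one_sub_div_sum_add_pos hx hσ s)]

theorem log_sub_sum_le_hSigma (hx : 0 ≤ x) (hσ0 : 0 < σ) (hσ1 : σ ≤ 1) :
    log σ - ∑ t, x t ≤ hSigma σ x := by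
  have hb := sum_add_pos hx hσ0
  have hprod : σ / ((∑ t, x t) + σ) ≤ ∏ s, (1 - x s / ((∑ t, x t) + σ)) := by
    have h := one_sub_sum_le_prod_one_sub univ (fun s _ ↦ div_nonneg (hx s) hb.le)
      (fun s _ ↦ (div_le_one hb).2 (lt_sum_add hx hσ0 s).le)
    rwa [← sum_div, one_sub_div hb.ne', add_sub_cancel_left] at h
  calc log σ - ∑ t, x t ≤ log σ - log ((∑ t, x t) + σ) := by
        linarith [log_le_sub_one_of_pos hb]
    _ = log (σ / ((∑ t, x t) + σ)) := (log_div hσ0.ne' hb.ne').symm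
    _ ≤ log (∏ s, (1 - x s / ((∑ t, x t) + σ))) := log_le_log (by positivity) hprod
    _ = hSigma σ x := by
        rw [log_prod fun s _ ↦ (one_sub_div_sum_add_pos hx hσ0 s).ne',
          hSigma_eq_sum_log_one_sub hb.ne']

theorem log_sub_one_le_hSigma (hx0 : 0 ≤ x) (hx1 : x ≤ 1) (hσ0 : 0 < σ) (hσ1 : σ ≤ 1) :
    log σ - 1 ≤ hSigma σ x := by
  rcases le_total (∑ t, x t) 1 with hS | hS
  · linarith [log_sub_sum_le_hSigma hx0 hσ0 hσ1]
  have hu : 1 / ((∑ t, x t) + σ) < 1 := by rw [div_lt_one (by positivity)]; linarith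
  calc log σ - 1 ≤ (∑ t, x t) * log (1 - 1 / ((∑ t, x t) + σ)) :=
        log_sub_one_le_mul_log_one_sub_inv hσ0 hσ1 hS
    _ = ∑ s, x s * log (1 - 1 / ((∑ t, x t) + σ)) := sum_mul ..
    _ ≤ ∑ s, log (1 - x s / ((∑ t, x t) + σ)) := sum_le_sum fun s _ ↦ by
        simpa only [mul_one_div] using mul_log_one_sub_le_log_one_sub_mul (hx0 s) (hx1 s) hu
    _ = hSigma σ x := (hSigma_eq_sum_log_one_sub (by positivity)).symm

end hSigma

theorem hSigma_sum_smul_le {ι κ : Type*} [Fintype ι] [Fintype κ] {σ : ℝ} (hσ0 : 0 < σ)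
    (hσ1 : σ ≤ 1) {x : κ → ι → ℝ} (hx0 : ∀ j, 0 ≤ x j) (hx1 : ∀ j, x j ≤ 1) {α : κ → ℝ}
    (hα0 : ∀ j, 0 ≤ α j) (hα1 : ∑ j, α j = 1) :
    hSigma σ (∑ j, α j • x j) ≤ ∑ j, α j * hSigma σ (x j) + log (Fintype.card κ / σ) := by
  obtain ⟨j, -, -⟩ := exists_ne_zero_of_sum_ne_zero (hα1 ▸ one_ne_zero : ∑ j, α j ≠ 0)
  rcases lt_or_ge (Fintype.card κ) 2 with hk | hk
  · have hcard : (1 : ℝ) ≤ Fintype.card κ := Nat.one_le_cast.2 (Fintype.card_pos_iff.2 ⟨j⟩)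
    have : Subsingleton κ := Fintype.card_le_one_iff_subsingleton.1 (by omega)
    rw [Fintype.sum_subsingleton _ j] at hα1
    have hlog : 0 ≤ log (Fintype.card κ / σ) := log_nonneg (by rw [le_div_iff₀ hσ0]; linarith)
    simp only [Fintype.sum_subsingleton _ j, hα1, one_smul, one_mul]
    exact le_add_of_nonneg_right hlog
  set T := ∑ t, (∑ j, α j • x j) t
  have hT : T = ∑ j, α j * ∑ t, x j t := by
    simp only [T, Finset.sum_apply, Pi.smul_apply, smul_eq_mul, mul_sum]
    exact sum_comm
  have hW : log σ - min T 1 ≤ ∑ j, α j * hSigma σ (x j) := by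
    rcases le_total T 1 with hT1 | hT1
    · calc log σ - min T 1 = ∑ j, α j * (log σ - ∑ t, x j t) := by
            rw [min_eq_left hT1, hT]
            simp only [mul_sub, sum_sub_distrib, ← sum_mul, hα1, one_mul]
        _ ≤ _ := sum_le_sum fun j _ ↦
            mul_le_mul_of_nonneg_left (log_sub_sum_le_hSigma (hx0 j) hσ0 hσ1) (hα0 j)
    · calc log σ - min T 1 = ∑ j, α j * (log σ - 1) := by
            rw [min_eq_right hT1, ← sum_mul, hα1, one_mul]
        _ ≤ _ := sum_le_sum fun j _ ↦
            mul_le_mul_of_nonneg_left (log_sub_one_le_hSigma (hx0 j) (hx1 j) hσ0 hσ1) (hα0 j)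
  have hy0 : 0 ≤ ∑ j, α j • x j := sum_nonneg fun j _ ↦ smul_nonneg (hα0 j) (hx0 j)
  have hlogk : 1 / 2 < log (Fintype.card κ) := by
    have : log 2 ≤ log (Fintype.card κ) := log_le_log two_pos (by exact_mod_cast hk)
    linarith [log_two_gt_d9]
  have h1 : hSigma σ (∑ j, α j • x j) ≤ -(T / (T + σ)) := hSigma_le_neg_div hy0 hσ0
  have h2 := min_one_sub_div_add_le_half (sum_nonneg fun t _ ↦ hy0 t : 0 ≤ T) hσ0 hσ1
  rw [log_div (by positivity) hσ0.ne']
  linarith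

/-- For `h_σ(x) = Σ_s log((‖x‖₁ − x_s + σ)/(‖x‖₁ + σ))` on the box `0 ≤ x ≤ 1`
(`+∞` outside), the `k`-th nonconvexity satisfies `ρᵏ(h_σ) ≤ log(k/σ)`;
equivalently, `h_σ(Σ αⱼ xʲ) ≤ Σ αⱼ h_σ(xʲ) + log(k/σ)` for all convex combinations
of `k` points of the box. -/
theorem rhoK_h_sigma_le (n : ℕ) (σ : ℝ) (hσ0 : 0 < σ) (hσ1 : σ ≤ 1)
    (h : (Fin n → ℝ) → EReal)
    (hh_in : ∀ x : Fin n → ℝ, (∀ s, 0 ≤ x s ∧ x s ≤ 1) →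
      h x = ((∑ s, Real.log (((∑ t, x t) - x s + σ) / ((∑ t, x t) + σ)) : ℝ) : EReal))
    (hh_out : ∀ x : Fin n → ℝ, ¬ (∀ s, 0 ≤ x s ∧ x s ≤ 1) → h x = ⊤) :
    ∀ k : ℕ, 1 ≤ k →
      rhoK k h ≤ ((Real.log ((k : ℝ) / σ) : ℝ) : EReal) ∧
      ∀ (x : Fin k → Fin n → ℝ), (∀ j s, 0 ≤ x j s ∧ x j s ≤ 1) →
        ∀ (α : Fin k → ℝ), (∀ j, 0 ≤ α j) → (∑ j, α j) = 1 →
          (∑ s, Real.log (((∑ t, ∑ j, α j * x j t) - (∑ j, α j * x j s) + σ) /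
              ((∑ t, ∑ j, α j * x j t) + σ))) ≤
            (∑ j, α j * ∑ s, Real.log (((∑ t, x j t) - x j s + σ) / ((∑ t, x j t) + σ)))
              + Real.log ((k : ℝ) / σ) := by
  intro k _
  have hbox : ∀ x : Fin n → ℝ, x ∈ Set.Icc 0 1 ↔ ∀ s, 0 ≤ x s ∧ x s ≤ 1 := fun x ↦ by
    simp only [Set.mem_Icc, Pi.le_def, Pi.zero_apply, Pi.one_apply, forall_and]
  have key : ∀ (x : Fin k → Fin n → ℝ) (α : Fin k → ℝ), (∀ j, x j ∈ Set.Icc 0 1) →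
      (∀ j, 0 ≤ α j) → ∑ j, α j = 1 →
      hSigma σ (∑ j, α j • x j) ≤ ∑ j, α j * hSigma σ (x j) + log (k / σ) :=
    fun x α hx hα0 hα1 ↦ by
      simpa only [Fintype.card_fin] using
        hSigma_sum_smul_le hσ0 hσ1 (fun j ↦ (hx j).1) (fun j ↦ (hx j).2) hα0 hα1
  refine ⟨rhoK_le_of_sum_smul_le (convex_Icc 0 1) (fun x hx ↦ hh_in x ((hbox x).1 hx))
    (fun x hx ↦ hh_out x (mt (hbox x).2 hx)) key, fun x hx α hα0 hα1 ↦ ?_⟩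
  have := key x α (fun j ↦ (hbox _).2 (hx j)) hα0 hα1
  simp only [hSigma, Finset.sum_apply, Pi.smul_apply, smul_eq_mul] at this
  exact this
end
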